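/- Let p : ℝ → ℝ be defined by p(ζ) = ζ (1 − Σ_{k=a}^{b} c_k ζᵏ) with 1 ≤ a ≤ b, all coefficients c_k > 0. Then the derivative p'(ζ) has exactly one zero in (0, ∞). -/

import Mathlib

/-!
Writing `p ζ = ζ - ∑ c_k ζ^(k+1)`, we get `p' = 1 - q` with `q ζ = ∑ (k+1) c_k ζᵏ`. Since all
exponents are positive and all coefficients are positive, `q` vanishes at `0`, is strictly
increasing on `[0, ∞)` and tends to `∞`, so by the intermediate value theorem it takes the
value `1` at exactly one positive point.
-/

open Filter Set

theorem existsUnique_pos_eq_of_strictMonoOn {f : ℝ → ℝ} (hcont : ContinuousOn f (Ici 0))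
    (hmono : StrictMonoOn f (Ici 0)) (htop : Tendsto f atTop atTop) {y : ℝ} (hy : f 0 < y) :
    ∃! ζ : ℝ, 0 < ζ ∧ f ζ = y := by
  obtain ⟨x, hyx, hx⟩ := ((htop.eventually_ge_atTop y).and (eventually_ge_atTop 0)).exists
  obtain ⟨ζ, hζ, hfζ⟩ := intermediate_value_Ioc hx (hcont.mono Icc_subset_Ici_self) ⟨hy, hyx⟩
  refine ⟨ζ, ⟨hζ.1, hfζ⟩, fun η ⟨hη, hfη⟩ => ?_⟩
  exact hmono.injOn (mem_Ici.2 hη.le) (mem_Ici.2 hζ.1.le) (hfη.trans hfζ.symm)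

section PowSum

variable {s : Finset ℕ} {c : ℕ → ℝ}

theorem sum_mul_zero_pow_of_notMem (h0 : 0 ∉ s) : ∑ k ∈ s, c k * (0 : ℝ) ^ k = 0 :=
  Finset.sum_eq_zero fun k hk => by rw [zero_pow (ne_of_mem_of_not_mem hk h0), mul_zero]

theorem strictMonoOn_sum_mul_pow (hs : s.Nonempty) (hc : ∀ k ∈ s, 0 < c k) (h0 : 0 ∉ s) :
    StrictMonoOn (fun x : ℝ => ∑ k ∈ s, c k * x ^ k) (Ici 0) := by
  intro x hx y _ hxy
  refine Finset.sum_lt_sum_of_nonempty hs fun k hk => ?_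
  exact mul_lt_mul_of_pos_left (pow_lt_pow_left₀ hxy hx (ne_of_mem_of_not_mem hk h0)) (hc k hk)

theorem tendsto_sum_mul_pow_atTop {a : ℕ} (ha : a ∈ s) (ha0 : a ≠ 0) (hc : ∀ k ∈ s, 0 < c k) :
    Tendsto (fun x : ℝ => ∑ k ∈ s, c k * x ^ k) atTop atTop := by
  refine tendsto_atTop_mono' atTop ?_ ((tendsto_pow_atTop ha0).const_mul_atTop (hc a ha))
  filter_upwards [eventually_ge_atTop 0] with x hx
  exact Finset.single_le_sum (f := fun k => c k * x ^ k) (fun k hk => by have := hc k hk; positivity) ha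

theorem hasDerivAt_mul_one_sub_sum_mul_pow (s : Finset ℕ) (c : ℕ → ℝ) (ζ : ℝ) :
    HasDerivAt (fun ζ => ζ * (1 - ∑ k ∈ s, c k * ζ ^ k))
      (1 - ∑ k ∈ s, c k * (k + 1) * ζ ^ k) ζ := by
  have hsum : HasDerivAt (fun ζ => ∑ k ∈ s, c k * ζ ^ (k + 1))
      (∑ k ∈ s, c k * (k + 1) * ζ ^ k) ζ := by
    refine HasDerivAt.fun_sum fun k _ => ?_
    simpa [mul_assoc] using (hasDerivAt_pow (k + 1) ζ).const_mul (c k)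
  have hexpand : (fun ζ => ζ * (1 - ∑ k ∈ s, c k * ζ ^ k)) = fun ζ => ζ - ∑ k ∈ s, c k * ζ ^ (k + 1) :=
    funext fun ζ => by
      rw [mul_sub, mul_one, Finset.mul_sum]
      exact congrArg _ (Finset.sum_congr rfl fun k _ => by ring)
  rw [hexpand]
  exact (hasDerivAt_id' ζ).fun_sub hsum

end PowSum

/-- For `p(ζ) = ζ (1 − Σ_{k=a}^{b} c_k ζᵏ)` with `1 ≤ a ≤ b` and all `c_k > 0`,
the derivative `p'` has exactly one zero in `(0, ∞)`. -/
theorem deriv_has_unique_positive_zero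
    (a b : ℕ) (ha : 1 ≤ a) (hab : a ≤ b) (c : ℕ → ℝ)
    (hc : ∀ k ∈ Finset.Icc a b, 0 < c k)
    (p : ℝ → ℝ) (hp : p = fun ζ => ζ * (1 - ∑ k ∈ Finset.Icc a b, c k * ζ ^ k)) :
    ∃! ζ : ℝ, 0 < ζ ∧ deriv p ζ = 0 := by
  set q : ℝ → ℝ := fun ζ => ∑ k ∈ Finset.Icc a b, c k * (k + 1) * ζ ^ k
  have hderiv : deriv p = fun ζ => 1 - q ζ := by
    subst hp
    exact funext fun ζ => (hasDerivAt_mul_one_sub_sum_mul_pow _ c ζ).deriv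
  have h0 : 0 ∉ Finset.Icc a b := by simp only [Finset.mem_Icc]; omega
  have hq : ∀ k ∈ Finset.Icc a b, 0 < c k * (k + 1) := fun k hk => by
    have := hc k hk; positivity
  have hq0 : q 0 < 1 := by
    simp only [q, sum_mul_zero_pow_of_notMem h0, zero_lt_one]
  have hunique : ∃! ζ : ℝ, 0 < ζ ∧ q ζ = 1 :=
    existsUnique_pos_eq_of_strictMonoOn (by fun_prop)
      (strictMonoOn_sum_mul_pow (Finset.nonempty_Icc.2 hab) hq h0)
      (tendsto_sum_mul_pow_atTop (Finset.mem_Icc.2 ⟨le_rfl, hab⟩) (by omega) hq) hq0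
  simpa only [hderiv, sub_eq_zero, eq_comm (a := (1 : ℝ))] using hunique
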